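/- Let μ be a Borel probability measure on ℝ with cumulative distribution function F (so F(x) = μ((−∞, x])), let τ ∈ ℝ and y ∈ ℝ, and assume ∫ |x| dμ(x) < ∞. Let X and X′ be independent random variables each with law μ. Then twCRPS_τ(F, y) = E|v_τ(X) − v_τ(y)| − (1/2) E|v_τ(X) − v_τ(X′)|, where v_τ(x) = max(x, τ) is the chaining function. -/

import Mathlib

open MeasureTheory Set ProbabilityTheory

/-- Threshold-weighted CRPS: `twCRPS_τ(F, y) = ∫_τ^∞ (F(z) − 𝟙{z ≥ y})² dz`. -/
noncomputable def twCRPS (F : ℝ → ℝ) (τ y : ℝ) : ℝ :=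
  ∫ z in Set.Ioi τ, (F z - if y ≤ z then (1 : ℝ) else 0) ^ 2

/-!
Since `|a - b|` is the Lebesgue measure of `[min a b, max a b)`, Tonelli turns
`E|v_τ(X) - v_τ(Y)|` into `∫_τ^∞ P(z ∈ [min X Y, max X Y)) dz`: a point `z > τ` lies between
`v_τ(a)` and `v_τ(b)` exactly when it lies between `a` and `b`. For `Y = y` this probability is
`1 - F z` or `F z` according as `y ≤ z` or not, and for an independent copy `Y = X'` it is
`2 F z (1 - F z)`. Pointwise, `(F z - 𝟙{y ≤ z})²` is the first minus half the second.
-/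

section

variable {Ω : Type*} [MeasurableSpace Ω] {f g : Ω → ℝ}

lemma measurableSet_snd_mem_Ico_min_max (hf : Measurable f) (hg : Measurable g) :
    MeasurableSet {p : Ω × ℝ | p.2 ∈ Ico (min (f p.1) (g p.1)) (max (f p.1) (g p.1))} :=
  (measurableSet_le (f := fun p : Ω × ℝ => min (f p.1) (g p.1)) (by fun_prop)
    measurable_snd).inter
    (measurableSet_lt (g := fun p : Ω × ℝ => max (f p.1) (g p.1)) measurable_snd (by fun_prop))

lemma measurable_measure_mem_Ico_min_max (ν : Measure Ω) [SFinite ν]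
    (hf : Measurable f) (hg : Measurable g) :
    Measurable fun z => ν {ω | z ∈ Ico (min (f ω) (g ω)) (max (f ω) (g ω))} :=
  measurable_measure_prodMk_right (measurableSet_snd_mem_Ico_min_max hf hg)

lemma lintegral_ofReal_abs_sub_eq_lintegral_measure_mem_Ico (ν : Measure Ω) [SFinite ν]
    (hf : Measurable f) (hg : Measurable g) :
    ∫⁻ ω, ENNReal.ofReal |f ω - g ω| ∂ν
      = ∫⁻ z, ν {ω | z ∈ Ico (min (f ω) (g ω)) (max (f ω) (g ω))} := by
  have hE := measurableSet_snd_mem_Ico_min_max hf hg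
  calc ∫⁻ ω, ENNReal.ofReal |f ω - g ω| ∂ν
      = ∫⁻ ω, volume (Ico (min (f ω) (g ω)) (max (f ω) (g ω))) ∂ν := by
        simp_rw [Real.volume_Ico, max_sub_min_eq_abs']
    _ = ν.prod volume _ := (Measure.prod_apply hE).symm
    _ = _ := Measure.prod_apply_symm hE

lemma mem_Ico_min_max_max_iff {a b τ z : ℝ} :
    z ∈ Ico (min (max a τ) (max b τ)) (max (max a τ) (max b τ))
      ↔ τ ≤ z ∧ z ∈ Ico (min a b) (max a b) := by
  simp only [mem_Ico, min_le_iff, max_le_iff, lt_max_iff]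
  grind

lemma lintegral_ofReal_abs_max_sub_max (ν : Measure Ω) [SFinite ν]
    (hf : Measurable f) (hg : Measurable g) (τ : ℝ) :
    ∫⁻ ω, ENNReal.ofReal |max (f ω) τ - max (g ω) τ| ∂ν
      = ∫⁻ z in Ioi τ, ν {ω | z ∈ Ico (min (f ω) (g ω)) (max (f ω) (g ω))} := by
  rw [lintegral_ofReal_abs_sub_eq_lintegral_measure_mem_Ico ν (hf.max measurable_const)
    (hg.max measurable_const), setLIntegral_congr Ioi_ae_eq_Ici,
    ← lintegral_indicator measurableSet_Ici]
  congr 1 with z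
  simp only [mem_Ico_min_max_max_iff, indicator_apply, mem_Ici]
  split_ifs with hz <;> simp [hz]

lemma integral_abs_max_sub_max (ν : Measure Ω) [IsFiniteMeasure ν]
    (hf : Measurable f) (hg : Measurable g) (τ : ℝ) :
    ∫ ω, |max (f ω) τ - max (g ω) τ| ∂ν
      = ∫ z in Ioi τ, ν.real {ω | z ∈ Ico (min (f ω) (g ω)) (max (f ω) (g ω))} := by
  rw [integral_eq_lintegral_of_nonneg_ae (ae_of_all _ fun _ => abs_nonneg _) (by fun_prop),
    integral_eq_lintegral_of_nonneg_ae (ae_of_all _ fun _ => measureReal_nonneg)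
      (measurable_measure_mem_Ico_min_max ν hf hg).ennreal_toReal.aestronglyMeasurable,
    lintegral_ofReal_abs_max_sub_max ν hf hg]
  simp only [ne_eq, measure_ne_top, not_false_eq_true, ofReal_measureReal]

lemma integrableOn_measureReal_mem_Ico_min_max (ν : Measure Ω) [IsFiniteMeasure ν]
    (hf : Measurable f) (hg : Measurable g) (τ : ℝ)
    (hint : Integrable (fun ω => |max (f ω) τ - max (g ω) τ|) ν) :
    IntegrableOn (fun z => ν.real {ω | z ∈ Ico (min (f ω) (g ω)) (max (f ω) (g ω))}) (Ioi τ) := by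
  refine ⟨(measurable_measure_mem_Ico_min_max ν hf hg).ennreal_toReal.aestronglyMeasurable, ?_⟩
  have hfin := hint.hasFiniteIntegral
  rw [hasFiniteIntegral_iff_ofReal (ae_of_all _ fun _ => abs_nonneg _),
    lintegral_ofReal_abs_max_sub_max ν hf hg] at hfin
  rw [hasFiniteIntegral_iff_ofReal (ae_of_all _ fun _ => measureReal_nonneg)]
  simpa only [ne_eq, measure_ne_top, not_false_eq_true, ofReal_measureReal]

lemma integrable_abs_max_sub_max {ν : Measure Ω} [IsFiniteMeasure ν]
    (hf : Integrable f ν) (hg : Integrable g ν) (τ : ℝ) :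
    Integrable (fun ω => |max (f ω) τ - max (g ω) τ|) ν :=
  ((hf.sup (integrable_const τ)).sub (hg.sup (integrable_const τ))).abs

end

lemma setOf_mem_Ico_min_max_const (y z : ℝ) :
    {x : ℝ | z ∈ Ico (min x y) (max x y)} = if y ≤ z then Ioi z else Iic z := by
  ext x
  split_ifs <;> simp only [mem_ofPred_eq, mem_Ico, min_le_iff, lt_max_iff, mem_Ioi, mem_Iic] <;>
    grind

lemma setOf_mem_Ico_min_max_prod (z : ℝ) :
    {p : ℝ × ℝ | z ∈ Ico (min p.1 p.2) (max p.1 p.2)} = Iic z ×ˢ Ioi z ∪ Ioi z ×ˢ Iic z := by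
  ext p
  simp only [mem_ofPred_eq, mem_Ico, min_le_iff, lt_max_iff, mem_union, mem_prod, mem_Ioi, mem_Iic]
  grind

lemma measureReal_prod_mem_Ico_min_max (μ ν : Measure ℝ) [IsFiniteMeasure μ] [IsFiniteMeasure ν]
    (z : ℝ) :
    (μ.prod ν).real {p | z ∈ Ico (min p.1 p.2) (max p.1 p.2)}
      = μ.real (Iic z) * ν.real (Ioi z) + μ.real (Ioi z) * ν.real (Iic z) := by
  have hdisj : Disjoint (Iic z ×ˢ Ioi z) (Ioi z ×ˢ Iic z) :=
    disjoint_prod.2 (Or.inl (Iic_disjoint_Ioi le_rfl))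
  rw [setOf_mem_Ico_min_max_prod,
    measureReal_union hdisj (measurableSet_Ioi.prod measurableSet_Iic),
    measureReal_prod_prod, measureReal_prod_prod]

theorem twCRPS_eq_integral_sub_half_integral_prod (μ : Measure ℝ) [IsProbabilityMeasure μ]
    {F : ℝ → ℝ} (hF : ∀ x, F x = μ.real (Iic x)) (hμ : Integrable (fun x => x) μ) (τ y : ℝ) :
    twCRPS F τ y = ∫ x, |max x τ - max y τ| ∂μ
      - 1 / 2 * ∫ p, |max p.1 τ - max p.2 τ| ∂(μ.prod μ) := by
  set r := fun z => μ.real {x | z ∈ Ico (min x y) (max x y)}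
  set s := fun z => (μ.prod μ).real {p : ℝ × ℝ | z ∈ Ico (min p.1 p.2) (max p.1 p.2)}
  have hIoi : ∀ z, μ.real (Ioi z) = 1 - F z := fun z => by
    rw [hF, ← compl_Iic, probReal_compl_eq_one_sub measurableSet_Iic]
  have hpoint : ∀ z, (F z - if y ≤ z then 1 else 0) ^ 2 = r z - 1 / 2 * s z := fun z => by
    simp only [r, s, setOf_mem_Ico_min_max_const, apply_ite μ.real,
      measureReal_prod_mem_Ico_min_max, hIoi, ← hF]
    split_ifs <;> ring
  have hr : IntegrableOn r (Ioi τ) := integrableOn_measureReal_mem_Ico_min_max μ measurable_id'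
    measurable_const τ (integrable_abs_max_sub_max hμ (integrable_const y) τ)
  have hs : IntegrableOn s (Ioi τ) := integrableOn_measureReal_mem_Ico_min_max (μ.prod μ)
    measurable_fst measurable_snd τ (integrable_abs_max_sub_max (hμ.comp_fst μ) (hμ.comp_snd μ) τ)
  calc twCRPS F τ y = ∫ z in Ioi τ, (r z - 1 / 2 * s z) :=
        setIntegral_congr_fun measurableSet_Ioi fun z _ => hpoint z
    _ = _ := by
      rw [integral_sub hr (hs.const_mul _), integral_const_mul,
        integral_abs_max_sub_max μ measurable_id' measurable_const,
        integral_abs_max_sub_max (μ.prod μ) measurable_fst measurable_snd]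

theorem twCRPS_expectation_form
    {Ω : Type*} [MeasurableSpace Ω] (P : Measure Ω) [IsProbabilityMeasure P]
    (μ : Measure ℝ) [IsProbabilityMeasure μ]
    (F : ℝ → ℝ) (hF : ∀ x, F x = (μ (Set.Iic x)).toReal)
    (hμint : Integrable (fun x => |x|) μ)
    (X X' : Ω → ℝ) (hX : Measurable X) (hX' : Measurable X')
    (hindep : IndepFun X X' P)
    (hlawX : P.map X = μ) (hlawX' : P.map X' = μ)
    (τ y : ℝ) :
    twCRPS F τ y =
      (∫ ω, |max (X ω) τ - max y τ| ∂P)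
        - (1 / 2) * ∫ ω, |max (X ω) τ - max (X' ω) τ| ∂P := by
  have hμ : Integrable (fun x => x) μ :=
    (integrable_norm_iff measurable_id'.aestronglyMeasurable).1
      (by simpa only [Real.norm_eq_abs] using hμint)
  have hpair : P.map (fun ω => (X ω, X' ω)) = μ.prod μ := by
    rw [(indepFun_iff_map_prod_eq_prod_map_map hX.aemeasurable hX'.aemeasurable).1 hindep,
      hlawX, hlawX']
  rw [twCRPS_eq_integral_sub_half_integral_prod μ hF hμ τ y, ← hpair, ← hlawX,
    integral_map hX.aemeasurable (by fun_prop), integral_map (by fun_prop) (by fun_prop)]
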